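/- Let X, Y be Type I spaces. (a) ω₁ (with the order topology and canonical sequence of initial segments) is a Y-direction in itself. (b) If Y admits a slicer, then every L≥0-direction in X is a Y-direction in X. (c) If there is a continuous unbounded map g : L≥0 → Y, then every Y-direction in X is an L≥0-direction in X. -/

import Mathlib

open Set Topology

noncomputable section

universe u

/-- The ordinal ω₁. -/
def omega1 : Ordinal.{0} := (Cardinal.aleph 1).ord

theorem omega1_pos : (0 : Ordinal.{0}) < omega1 := by
  have := Cardinal.ord_lt_ord.mpr (Cardinal.aleph_pos 1)
  simpa [omega1, Cardinal.ord_zero] using this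

theorem omega1_isLimit : Order.IsSuccLimit omega1 :=
  Cardinal.isSuccLimit_ord (Cardinal.aleph0_le_aleph 1)

/-- ω₁ as a type (the set of countable ordinals). -/
def W : Type 1 := {a : Ordinal.{0} // a < omega1}

instance : LinearOrder W := by unfold W; infer_instance
instance : TopologicalSpace W := Preorder.topology W
instance : OrderTopology W := ⟨rfl⟩

def w0 : W := ⟨0, omega1_pos⟩
def Wsucc (a : W) : W := ⟨Order.succ a.1, omega1_isLimit.succ_lt a.2⟩

/-- The closed long ray: ω₁ × [0,1) with the lexicographic order topology. -/
def LongRay : Type 1 := W ×ₗ ↥(Set.Ico (0:ℝ) 1)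

instance : LinearOrder LongRay := by unfold LongRay; infer_instance
instance : TopologicalSpace LongRay := Preorder.topology LongRay
instance : OrderTopology LongRay := ⟨rfl⟩

/-- Embedding of ω₁ into the long ray as the points (α, 0). -/
def iW (a : W) : LongRay := toLex (a, ⟨0, le_rfl, one_pos⟩)
def lrZero : LongRay := iW w0

/-- A subset of ω₁ is unbounded. -/
def WUnbounded (S : Set W) : Prop := ∀ a : W, ∃ b ∈ S, a < b
/-- A subset of ω₁ is closed (in the order sense). -/
def WClosed (S : Set W) : Prop :=
  ∀ a : W, (∃ b, b < a) → (∀ b, b < a → ∃ c ∈ S, b < c ∧ c < a) → a ∈ S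
def WClub (S : Set W) : Prop := WClosed S ∧ WUnbounded S
def WStationary (A : Set W) : Prop := ∀ C : Set W, WClub C → (A ∩ C).Nonempty

/-- A Type I space structure on `X`. -/
structure TypeI (X : Type u) [TopologicalSpace X] where
  seq : W → Set X
  isOpen : ∀ a, IsOpen (seq a)
  lindelof : ∀ a, IsLindelof (closure (seq a))
  mono : ∀ a b : W, a < b → closure (seq a) ⊆ seq b
  covers : ∀ x : X, ∃ a, x ∈ seq a

variable {X : Type u} [TopologicalSpace X]

/-- A subset is bounded if contained in some `X_α`. -/
def TypeI.Bdd (hT : TypeI X) (A : Set X) : Prop := ∃ a, A ⊆ hT.seq a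
/-- Club: closed and unbounded. -/
def TypeI.Club (hT : TypeI X) (A : Set X) : Prop := IsClosed A ∧ ¬ hT.Bdd A
/-- A predirection: an unbounded set such that any function unbounded on it is
unbounded on every unbounded subset of it. -/
def TypeI.Predirection (hT : TypeI X) (D : Set X) : Prop :=
  ¬ hT.Bdd D ∧ ∀ f : X → LongRay, Continuous f → ¬ BddAbove (f '' D) →
    ∀ A ⊆ D, ¬ hT.Bdd A → ¬ BddAbove (f '' A)
/-- A direction: a closed predirection. -/
def TypeI.IsDirection (hT : TypeI X) (D : Set X) : Prop := IsClosed D ∧ hT.Predirection D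
/-- The bones. -/
def TypeI.bone (hT : TypeI X) (a : W) : Set X := closure (hT.seq a) \ hT.seq a
/-- The sequence is canonical. -/
def TypeI.Canonical (hT : TypeI X) : Prop :=
  ∀ a : W, Order.IsSuccLimit a.1 → hT.seq a = ⋃ b ∈ {b : W | b < a}, hT.seq b
/-- A slicer. -/
def TypeI.Slicer (hT : TypeI X) (s : X → LongRay) : Prop :=
  Continuous s ∧ ∀ a : W, ∀ x ∈ closure (hT.seq (Wsucc a)) \ hT.seq a,
    s x ∈ Set.Icc (iW a) (iW (Wsucc a))

/-- ω-bounded: closures of countable sets are compact. -/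
def OmegaBounded (X : Type u) [TopologicalSpace X] : Prop :=
  ∀ S : Set X, S.Countable → IsCompact (closure S)
/-- ω₁-compact: no uncountable closed discrete subset. -/
def Omega1Compact (X : Type u) [TopologicalSpace X] : Prop :=
  ∀ C : Set X, IsClosed C → DiscreteTopology C → C.Countable
/-- Countably tight. -/
def CountablyTight (X : Type u) [TopologicalSpace X] : Prop :=
  ∀ (A : Set X) (x : X), x ∈ closure A → ∃ B ⊆ A, B.Countable ∧ x ∈ closure B

universe v
/-- Y-directions. -/
def YDirection {X : Type u} {Y : Type v} [TopologicalSpace X] [TopologicalSpace Y]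
    (hTX : TypeI X) (hTY : TypeI Y) (D : Set X) : Prop :=
  IsClosed D ∧ ¬ hTX.Bdd D ∧ ∀ f : X → Y, Continuous f → ¬ hTY.Bdd (f '' D) →
    ∀ A ⊆ D, ¬ hTX.Bdd A → ¬ hTY.Bdd (f '' A)


/- ===================== Auxiliary lemmas ===================== -/

section Aux

instance : Nonempty W := ⟨w0⟩

lemma W_lt_iff {a b : W} : a < b ↔ a.1 < b.1 := Subtype.coe_lt_coe.symm
lemma W_le_iff {a b : W} : a ≤ b ↔ a.1 ≤ b.1 := Subtype.coe_le_coe.symm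

lemma lt_Wsucc (a : W) : a < Wsucc a := by
  rw [W_lt_iff]; exact Order.lt_succ a.1

lemma Wsucc_le_of_lt {a b : W} (h : a < b) : Wsucc a ≤ b := by
  rw [W_le_iff]; exact Order.succ_le_of_lt (W_lt_iff.1 h)

lemma Wsucc_lt_Wsucc {a b : W} (h : a < b) : Wsucc a < Wsucc b :=
  lt_of_le_of_lt (Wsucc_le_of_lt h) (lt_Wsucc b)

lemma w0_le (a : W) : w0 ≤ a := by
  rw [W_le_iff]; exact zero_le

lemma W_countable_bddAbove {C : Set W} (hC : C.Countable) : BddAbove C := by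
  rcases C.eq_empty_or_nonempty with h | h
  · exact h ▸ bddAbove_empty
  · obtain ⟨f, hf⟩ := Set.Countable.exists_eq_range hC h
    have hlt : iSup (fun n => (f n).1) < omega1 := by
      apply Ordinal.iSup_lt_ord _ (fun n => (f n).2)
      rw [omega1, Cardinal.isRegular_aleph_one.cof_eq]
      simpa using Cardinal.aleph0_lt_aleph_one
    refine ⟨⟨_, hlt⟩, fun x hx => ?_⟩
    rw [hf] at hx
    obtain ⟨n, rfl⟩ := hx
    apply W_le_iff.2
    exact le_ciSup (Ordinal.bddAbove_range _) n

lemma W_lub {S : Set W} (hne : S.Nonempty) (hbdd : BddAbove S) : ∃ d, IsLUB S d := by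
  obtain ⟨u, hu⟩ := hbdd
  have hne' : (Subtype.val '' S).Nonempty := hne.image _
  have hb : ∀ o ∈ Subtype.val '' S, o ≤ u.1 := fun o ho => by
    obtain ⟨x, hx, rfl⟩ := ho; exact W_le_iff.1 (hu hx)
  have hbdd' : BddAbove (Subtype.val '' S) := ⟨u.1, hb⟩
  have hlub := isLUB_csSup hne' hbdd'
  have hlt : sSup (Subtype.val '' S) < omega1 :=
    lt_of_le_of_lt (csSup_le hne' hb) u.2
  refine ⟨⟨_, hlt⟩, ⟨fun x hx => ?_, fun v hv => ?_⟩⟩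
  · apply W_le_iff.2; exact hlub.1 ⟨x, hx, rfl⟩
  · apply W_le_iff.2
    exact hlub.2 fun o ho => by
      obtain ⟨x, hx, rfl⟩ := ho; exact W_le_iff.1 (hv hx)

/-! LongRay basics -/

abbrev II := ↥(Set.Ico (0:ℝ) 1)
def iI : II := ⟨0, le_rfl, one_pos⟩

lemma iI_le (r : II) : iI ≤ r := Subtype.coe_le_coe.1 r.2.1

lemma iW_mono {a b : W} (h : a ≤ b) : iW a ≤ iW b := by
  rcases eq_or_lt_of_le h with rfl | h
  · exact le_rfl
  · exact (Prod.Lex.toLex_le_toLex).2 (Or.inl h)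

lemma iW_lt {a b : W} (h : a < b) : iW a < iW b := (Prod.Lex.toLex_lt_toLex).2 (Or.inl h)

lemma lt_iW_iff {z : LongRay} {b : W} : z < iW b ↔ (ofLex z).1 < b := by
  constructor
  · intro h
    rcases (Prod.Lex.toLex_lt_toLex (x := ofLex z) (y := (b, iI))).1 (by exact h) with h1 | ⟨h1, h2⟩
    · exact h1
    · exact absurd h2 (not_lt_of_ge (iI_le _))
  · intro h
    have : toLex (ofLex z) < toLex ((b : W), iI) := (Prod.Lex.toLex_lt_toLex).2 (Or.inl h)
    exact this

lemma lt_iW_Wsucc_fst (z : LongRay) : z < iW (Wsucc (ofLex z).1) := by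
  rw [lt_iW_iff]; exact lt_Wsucc _

lemma iW_le_of_fst_le {b : W} {z : LongRay} (h : b ≤ (ofLex z).1) : iW b ≤ z := by
  rcases eq_or_lt_of_le h with h1 | h1
  · have : toLex ((b:W), iI) ≤ toLex (ofLex z) :=
      (Prod.Lex.toLex_le_toLex).2 (Or.inr ⟨h1.symm ▸ rfl, by simpa [h1] using iI_le (ofLex z).2⟩)
    exact this
  · have : toLex ((b:W), iI) ≤ toLex (ofLex z) := (Prod.Lex.toLex_le_toLex).2 (Or.inl h1)
    exact this

lemma lrZero_le (z : LongRay) : lrZero ≤ z := iW_le_of_fst_le (w0_le _)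

lemma LongRay_nomax (z : LongRay) : ∃ w : LongRay, z < w := ⟨_, lt_iW_Wsucc_fst z⟩

lemma LongRay_countable_bddAbove {C : Set LongRay} (hC : C.Countable) : BddAbove C := by
  have h1 : ((fun z : LongRay => (ofLex z).1) '' C).Countable := hC.image _
  obtain ⟨u, hu⟩ := W_countable_bddAbove h1
  refine ⟨iW (Wsucc u), fun z hz => ?_⟩
  exact le_of_lt (lt_of_lt_of_le (lt_iW_Wsucc_fst z)
    (iW_mono (by rw [W_le_iff]
                 exact Order.succ_le_succ (W_le_iff.1 (hu ⟨z, hz, rfl⟩)))))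

lemma LongRay_lub {S : Set LongRay} (hne : S.Nonempty) (hbdd : BddAbove S) :
    ∃ d, IsLUB S d := by
  classical
  obtain ⟨u, hu⟩ := hbdd
  set F1 : Set W := (fun z : LongRay => (ofLex z).1) '' S with hF1
  have hF1ne : F1.Nonempty := hne.image _
  have hfst_le : ∀ z ∈ S, (ofLex z).1 ≤ (ofLex u).1 := by
    intro z hz
    rcases (Prod.Lex.toLex_le_toLex (x := ofLex z) (y := ofLex u)).1 (by exact hu hz) with h | ⟨h, _⟩
    · exact le_of_lt h
    · exact le_of_eq h
  have hF1bdd : BddAbove F1 := ⟨(ofLex u).1, fun w hw => by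
    obtain ⟨z, hz, rfl⟩ := hw; exact hfst_le z hz⟩
  obtain ⟨wbar, hwbar⟩ := W_lub hF1ne hF1bdd
  set S2 : Set II := {r : II | toLex (wbar, r) ∈ S} with hS2
  have hmem_fst : ∀ z ∈ S, (ofLex z).1 ≤ wbar := fun z hz => hwbar.1 ⟨z, hz, rfl⟩
  have hub_fst : ∀ v : LongRay, v ∈ upperBounds S → wbar ≤ (ofLex v).1 := by
    intro v hv
    refine hwbar.2 fun w hw => ?_
    obtain ⟨z, hz, rfl⟩ := hw
    rcases (Prod.Lex.toLex_le_toLex (x := ofLex z) (y := ofLex v)).1 (by exact hv hz) with h | ⟨h, _⟩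
    · exact le_of_lt h
    · exact le_of_eq h
  rcases S2.eq_empty_or_nonempty with hS2e | hS2ne
  · refine ⟨toLex (wbar, iI), ⟨fun z hz => ?_, fun v hv => ?_⟩⟩
    · have h1 : (ofLex z).1 ≤ wbar := hmem_fst z hz
      rcases eq_or_lt_of_le h1 with h2 | h2
      · exfalso
        have : (ofLex z).2 ∈ S2 := by
          simp only [hS2, Set.mem_setOf_eq]
          rw [← h2, Prod.mk.eta]; exact hz
        rw [hS2e] at this; exact this
      · have : toLex (ofLex z) ≤ toLex ((wbar:W), iI) := (Prod.Lex.toLex_le_toLex).2 (Or.inl h2)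
        exact this
    · have h1 := hub_fst v hv
      rcases eq_or_lt_of_le h1 with h2 | h2
      · have : toLex ((wbar:W), iI) ≤ toLex (ofLex v) :=
          (Prod.Lex.toLex_le_toLex).2 (Or.inr ⟨h2, by simpa [← h2] using iI_le (ofLex v).2⟩)
        exact this
      · have : toLex ((wbar:W), iI) ≤ toLex (ofLex v) := (Prod.Lex.toLex_le_toLex).2 (Or.inl h2)
        exact this
  · have hS2bdd : BddAbove (Subtype.val '' S2 : Set ℝ) := ⟨1, fun r hr => by
      obtain ⟨x, _, rfl⟩ := hr; exact le_of_lt x.2.2⟩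
    have hS2ne' : (Subtype.val '' S2).Nonempty := hS2ne.image _
    set ρ : ℝ := sSup (Subtype.val '' S2) with hρ
    have hρ0 : 0 ≤ ρ := by
      obtain ⟨r, hr⟩ := hS2ne
      exact le_trans r.2.1 (le_csSup hS2bdd ⟨r, hr, rfl⟩)
    by_cases hρlt : ρ < 1
    · refine ⟨toLex (wbar, ⟨ρ, hρ0, hρlt⟩), ⟨fun z hz => ?_, fun v hv => ?_⟩⟩
      · have h1 : (ofLex z).1 ≤ wbar := hmem_fst z hz
        rcases eq_or_lt_of_le h1 with h2 | h2
        · have hz2 : (ofLex z).2 ∈ S2 := by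
            simp only [hS2, Set.mem_setOf_eq]
            rw [← h2, Prod.mk.eta]; exact hz
          have : toLex (ofLex z) ≤ toLex ((wbar:W), (⟨ρ, hρ0, hρlt⟩ : II)) :=
            (Prod.Lex.toLex_le_toLex).2 (Or.inr ⟨h2, Subtype.coe_le_coe.1
              (le_csSup hS2bdd ⟨(ofLex z).2, hz2, rfl⟩)⟩)
          exact this
        · have : toLex (ofLex z) ≤ toLex ((wbar:W), (⟨ρ, hρ0, hρlt⟩:II)) :=
            (Prod.Lex.toLex_le_toLex).2 (Or.inl h2)
          exact this
      · have h1 := hub_fst v hv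
        rcases eq_or_lt_of_le h1 with h2 | h2
        · have hq : ρ ≤ ((ofLex v).2 : ℝ) := by
            apply csSup_le hS2ne'
            intro r hr
            obtain ⟨x, hx, rfl⟩ := hr
            have h3 : toLex ((wbar:W), x) ≤ toLex (ofLex v) := by exact hv hx
            rcases (Prod.Lex.toLex_le_toLex).1 h3 with h4 | ⟨_, h4⟩
            · exact absurd h4 (by rw [← h2]; exact lt_irrefl _)
            · exact Subtype.coe_le_coe.2 h4
          have : toLex ((wbar:W), (⟨ρ, hρ0, hρlt⟩:II)) ≤ toLex (ofLex v) :=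
            (Prod.Lex.toLex_le_toLex).2 (Or.inr ⟨h2, hq⟩)
          exact this
        · have : toLex ((wbar:W), (⟨ρ, hρ0, hρlt⟩:II)) ≤ toLex (ofLex v) :=
            (Prod.Lex.toLex_le_toLex).2 (Or.inl h2)
          exact this
    · refine ⟨toLex (Wsucc wbar, iI), ⟨fun z hz => ?_, fun v hv => ?_⟩⟩
      · have h1 : (ofLex z).1 ≤ wbar := hmem_fst z hz
        have : toLex (ofLex z) ≤ toLex ((Wsucc wbar : W), iI) :=
          (Prod.Lex.toLex_le_toLex).2 (Or.inl (lt_of_le_of_lt h1 (lt_Wsucc _)))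
        exact this
      · have h1 := hub_fst v hv
        rcases eq_or_lt_of_le h1 with h2 | h2
        · exfalso
          have hq : ρ ≤ ((ofLex v).2 : ℝ) := by
            apply csSup_le hS2ne'
            intro r hr
            obtain ⟨x, hx, rfl⟩ := hr
            have h3 : toLex ((wbar:W), x) ≤ toLex (ofLex v) := by exact hv hx
            rcases (Prod.Lex.toLex_le_toLex).1 h3 with h4 | ⟨_, h4⟩
            · exact absurd h4 (by rw [← h2]; exact lt_irrefl _)
            · exact Subtype.coe_le_coe.2 h4
          have : (1:ℝ) ≤ ((ofLex v).2 : ℝ) := le_trans (le_of_not_gt hρlt) hq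
          exact absurd (ofLex v).2.2.2 (not_lt_of_ge this)
        · have h3 : Wsucc wbar ≤ (ofLex v).1 := Wsucc_le_of_lt h2
          rcases eq_or_lt_of_le h3 with h4 | h4
          · have : toLex ((Wsucc wbar : W), iI) ≤ toLex (ofLex v) :=
              (Prod.Lex.toLex_le_toLex).2 (Or.inr ⟨h4, by rw [h4]; exact iI_le _⟩)
            exact this
          · have : toLex ((Wsucc wbar : W), iI) ≤ toLex (ofLex v) :=
              (Prod.Lex.toLex_le_toLex).2 (Or.inl h4)
            exact this

end Aux


section Aux2

universe w
variable {Y' : Type v} [TopologicalSpace Y']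

lemma TypeI.seq_subset_seq (hT : TypeI Y') {a b : W} (h : a < b) :
    hT.seq a ⊆ hT.seq b := fun x hx => hT.mono a b h (subset_closure hx)

lemma TypeI.seq_subset_of_le (hT : TypeI Y') {a b : W} (h : a ≤ b) :
    hT.seq a ⊆ hT.seq b := by
  rcases eq_or_lt_of_le h with rfl | h
  · exact le_rfl
  · exact hT.seq_subset_seq h

lemma TypeI.bdd_mono (hT : TypeI Y') {A B : Set Y'} (hAB : A ⊆ B) (h : hT.Bdd B) :
    hT.Bdd A := by
  obtain ⟨a, ha⟩ := h; exact ⟨a, hAB.trans ha⟩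

lemma TypeI.bdd_union (hT : TypeI Y') {A B : Set Y'} (hA : hT.Bdd A) (hB : hT.Bdd B) :
    hT.Bdd (A ∪ B) := by
  obtain ⟨a, ha⟩ := hA; obtain ⟨b, hb⟩ := hB
  refine ⟨Wsucc (max a b), Set.union_subset ?_ ?_⟩
  · exact ha.trans (hT.seq_subset_seq (lt_of_le_of_lt (le_max_left a b) (lt_Wsucc _)))
  · exact hb.trans (hT.seq_subset_seq (lt_of_le_of_lt (le_max_right a b) (lt_Wsucc _)))

lemma TypeI.bdd_of_subset_closure (hT : TypeI Y') {A : Set Y'} {a : W}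
    (h : A ⊆ closure (hT.seq a)) : hT.Bdd A :=
  ⟨Wsucc a, h.trans (hT.mono a (Wsucc a) (lt_Wsucc a))⟩

/-- Images of `Iic z` under a continuous map into a Type I space are bounded. -/
lemma bdd_image_Iic {Z : Type w} [LinearOrder Z] [TopologicalSpace Z] [OrderTopology Z]
    (hlub : ∀ S : Set Z, S.Nonempty → BddAbove S → ∃ d, IsLUB S d)
    (z₀ : Z) (hz₀ : ∀ z, z₀ ≤ z)
    (hT : TypeI Y') (g : Z → Y') (hg : Continuous g) :
    ∀ z : Z, hT.Bdd (g '' Set.Iic z) := by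
  by_contra hcon
  push_neg at hcon
  obtain ⟨zs, hzs⟩ := hcon
  set F : Set Z := {z | hT.Bdd (g '' Set.Iic z)} with hF
  have hmono : ∀ {z w : Z}, z ≤ w → w ∈ F → z ∈ F := by
    intro z w hzw hw
    exact hT.bdd_mono (Set.image_mono (Set.Iic_subset_Iic.2 hzw)) hw
  have hFz₀ : z₀ ∈ F := by
    obtain ⟨a, ha⟩ := hT.covers (g z₀)
    refine ⟨a, fun y hy => ?_⟩
    obtain ⟨x, hx, rfl⟩ := hy
    have : x = z₀ := le_antisymm hx (hz₀ x)
    rwa [this]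
  have hub : zs ∈ upperBounds F := by
    intro w hw
    by_contra hle
    exact hzs (hmono (le_of_lt (lt_of_not_ge hle)) hw)
  obtain ⟨δ, hδ⟩ := hlub F ⟨z₀, hFz₀⟩ ⟨zs, hub⟩
  obtain ⟨m, hm⟩ := hT.covers (g δ)
  have hV : g ⁻¹' (hT.seq m) ∈ 𝓝 δ := ((hT.isOpen m).preimage hg).mem_nhds hm
  have hδF : δ ∈ F := by
    by_cases hl : ∃ l, l < δ
    · obtain ⟨l, hlδ, hIoc⟩ := exists_Ioc_subset_of_mem_nhds hV hl
      obtain ⟨w', hwF, hlw⟩ : ∃ w' ∈ F, l < w' := by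
        by_contra hc
        push_neg at hc
        exact (not_le_of_gt hlδ) (hδ.2 fun w hw => le_of_not_gt fun h => (not_le_of_gt h) (hc w hw))
      have hwδ : w' ≤ δ := hδ.1 hwF
      obtain ⟨aw, haw⟩ := hwF
      refine ⟨Wsucc (max aw m), fun y hy => ?_⟩
      obtain ⟨x, hx, rfl⟩ := hy
      by_cases hxw : x ≤ w'
      · exact hT.seq_subset_seq (lt_of_le_of_lt (le_max_left aw m) (lt_Wsucc _))
          (haw ⟨x, hxw, rfl⟩)
      · have hxI : x ∈ Set.Ioc l δ := ⟨lt_of_lt_of_le hlw (le_of_not_ge hxw), hx⟩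
        exact hT.seq_subset_seq (lt_of_le_of_lt (le_max_right aw m) (lt_Wsucc _)) (hIoc hxI)
    · obtain ⟨a, ha⟩ := hT.covers (g δ)
      refine ⟨a, fun y hy => ?_⟩
      obtain ⟨x, hx, rfl⟩ := hy
      have : x = δ := le_antisymm hx (le_of_not_gt fun h => hl ⟨x, h⟩)
      rwa [this]
  have hδzs : δ < zs := by
    have hδle : δ ≤ zs := hδ.2 hub
    rcases eq_or_lt_of_le hδle with h | h
    · exact absurd (h ▸ hδF) hzs
    · exact h
  obtain ⟨u, hδu, hIco⟩ := exists_Ico_subset_of_mem_nhds hV ⟨zs, hδzs⟩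
  obtain ⟨aδ, haδ⟩ := hδF
  by_cases hmid : ∃ z', δ < z' ∧ z' < u
  · obtain ⟨z', h1, h2⟩ := hmid
    have hz'F : z' ∈ F := by
      refine ⟨Wsucc (max aδ m), fun y hy => ?_⟩
      obtain ⟨x, hx, rfl⟩ := hy
      by_cases hxδ : x ≤ δ
      · exact hT.seq_subset_seq (lt_of_le_of_lt (le_max_left aδ m) (lt_Wsucc _))
          (haδ ⟨x, hxδ, rfl⟩)
      · have hxI : x ∈ Set.Ico δ u :=
          ⟨le_of_lt (lt_of_not_ge hxδ), lt_of_le_of_lt hx h2⟩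
        exact hT.seq_subset_seq (lt_of_le_of_lt (le_max_right aδ m) (lt_Wsucc _)) (hIco hxI)
    exact absurd (hδ.1 hz'F) (not_le_of_gt h1)
  · obtain ⟨au, hau⟩ := hT.covers (g u)
    have huF : u ∈ F := by
      refine ⟨Wsucc (max (max aδ m) au), fun y hy => ?_⟩
      obtain ⟨x, hx, rfl⟩ := hy
      by_cases hxδ : x ≤ δ
      · exact hT.seq_subset_seq (lt_of_le_of_lt ((le_max_left aδ m).trans (le_max_left _ au))
          (lt_Wsucc _)) (haδ ⟨x, hxδ, rfl⟩)
      · rcases eq_or_lt_of_le hx with rfl | hxu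
        · exact hT.seq_subset_seq (lt_of_le_of_lt (le_max_right _ au) (lt_Wsucc _)) hau
        · exact absurd ⟨x, lt_of_not_ge hxδ, hxu⟩ hmid
    exact absurd (hδ.1 huF) (not_le_of_gt hδu)

/-- Core lemma: a continuous unbounded map from a long-line-like order into a Type I
space is unbounded on every unbounded subset. -/
lemma core_unbounded {Z : Type w} [LinearOrder Z] [TopologicalSpace Z] [OrderTopology Z]
    (hlub : ∀ S : Set Z, S.Nonempty → BddAbove S → ∃ d, IsLUB S d)
    (hcnt : ∀ S : Set Z, S.Countable → BddAbove S)
    (z₀ : Z) (hz₀ : ∀ z, z₀ ≤ z)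
    (hT : TypeI Y') (g : Z → Y') (hg : Continuous g) (hgu : ¬ hT.Bdd (Set.range g)) :
    ∀ A : Set Z, ¬ BddAbove A → ¬ hT.Bdd (g '' A) := by
  intro A hA hbdd
  obtain ⟨c, hc⟩ := hbdd
  set c3 : W := Wsucc (Wsucc c) with hc3
  set E : Set Z := {z | g z ∉ hT.seq c3} with hE
  have hEunb : ¬ BddAbove E := by
    intro hEb
    obtain ⟨β, hβ⟩ := hEb
    apply hgu
    have h1 : Set.range g ⊆ (g '' Set.Iic β) ∪ hT.seq c3 := by
      rintro y ⟨z, rfl⟩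
      by_cases hz : z ≤ β
      · exact Or.inl ⟨z, hz, rfl⟩
      · by_cases hgz : g z ∈ hT.seq c3
        · exact Or.inr hgz
        · exact absurd (hβ (show z ∈ E from hgz)) hz
    exact hT.bdd_mono h1 (hT.bdd_union (bdd_image_Iic hlub z₀ hz₀ hT g hg β) ⟨c3, le_rfl⟩)
  have hEex : ∀ z : Z, ∃ e, e ∈ E ∧ z < e := by
    intro z
    obtain ⟨e, he, hlt⟩ := not_bddAbove_iff.1 hEunb z
    exact ⟨e, he, hlt⟩
  have hAex : ∀ z : Z, ∃ a, a ∈ A ∧ z < a := by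
    intro z
    obtain ⟨a, ha, hlt⟩ := not_bddAbove_iff.1 hA z
    exact ⟨a, ha, hlt⟩
  classical
  -- interleaved sequences
  let step : Z × Z → Z × Z := fun p =>
    let u := (hEex p.2).choose
    (u, (hAex u).choose)
  let ch : ℕ → Z × Z := fun n => step^[n+1] (z₀, z₀)
  have hstep : ∀ p : Z × Z, (step p).1 ∈ E ∧ p.2 < (step p).1 ∧ (step p).2 ∈ A ∧
      (step p).1 < (step p).2 := by
    intro p
    refine ⟨(hEex p.2).choose_spec.1, (hEex p.2).choose_spec.2, ?_, ?_⟩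
    · exact (hAex (hEex p.2).choose).choose_spec.1
    · exact (hAex (hEex p.2).choose).choose_spec.2
  have hch : ∀ n, (ch n).1 ∈ E ∧ (ch n).2 ∈ A ∧ (ch n).1 < (ch n).2 ∧
      (ch n).2 < (ch (n+1)).1 := by
    intro n
    have h1 : ch (n+1) = step (ch n) := by
      simp only [ch, Function.iterate_succ_apply']
    have h0 := hstep (step^[n] (z₀, z₀))
    have h2 : ch n = step (step^[n] (z₀, z₀)) := by
      simp only [ch, Function.iterate_succ_apply']
    refine ⟨h2 ▸ h0.1, h2 ▸ h0.2.2.1, h2 ▸ h0.2.2.2, ?_⟩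
    rw [h1]
    exact (hstep (ch n)).2.1
  set av : ℕ → Z := fun n => (ch n).2 with hav
  set uv : ℕ → Z := fun n => (ch n).1 with huv
  have hrange_bdd : BddAbove (Set.range av) := hcnt _ (Set.countable_range _)
  obtain ⟨δ, hδ⟩ := hlub (Set.range av) ⟨av 0, ⟨0, rfl⟩⟩ hrange_bdd
  have hδu : IsLUB (Set.range uv) δ := by
    constructor
    · rintro y ⟨n, rfl⟩
      exact le_of_lt (lt_of_lt_of_le (hch n).2.2.1 (hδ.1 ⟨n, rfl⟩))
    · intro v hv
      apply hδ.2
      rintro y ⟨n, rfl⟩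
      exact le_of_lt (lt_of_lt_of_le (hch n).2.2.2 (hv ⟨n+1, rfl⟩))
  have hgδ : g δ ∈ closure (hT.seq c) := by
    have h1 : δ ∈ closure (Set.range av) := hδ.mem_closure ⟨av 0, ⟨0, rfl⟩⟩
    have h2 : Set.range av ⊆ g ⁻¹' (closure (hT.seq c)) := by
      rintro y ⟨n, rfl⟩
      exact subset_closure (hc ⟨av n, (hch n).2.1, rfl⟩)
    have h3 : closure (Set.range av) ⊆ g ⁻¹' (closure (hT.seq c)) :=
      closure_minimal h2 (isClosed_closure.preimage hg)
    exact h3 h1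
  have hgδ2 : g δ ∈ hT.seq (Wsucc c) := hT.mono c (Wsucc c) (lt_Wsucc c) hgδ
  have hV : g ⁻¹' (hT.seq (Wsucc c)) ∈ 𝓝 δ :=
    ((hT.isOpen (Wsucc c)).preimage hg).mem_nhds hgδ2
  have hδclu : δ ∈ closure (Set.range uv) := hδu.mem_closure ⟨uv 0, ⟨0, rfl⟩⟩
  obtain ⟨z, hz1, hz2⟩ := mem_closure_iff_nhds.1 hδclu _ hV
  obtain ⟨n, rfl⟩ := hz2
  have : g (uv n) ∈ hT.seq c3 :=
    hT.mono (Wsucc c) c3 (lt_Wsucc _) (subset_closure hz1)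
  exact (hch n).1 this

end Aux2


section Aux3

variable {Y' : Type v} [TopologicalSpace Y']

lemma lindelof_subset_Iio {K : Set LongRay} (hK : IsLindelof K) :
    ∃ q : W, K ⊆ Set.Iio (iW q) := by
  have hcov : K ⊆ ⋃ a : W, Set.Iio (iW a) := fun z _ =>
    Set.mem_iUnion.2 ⟨Wsucc (ofLex z).1, lt_iW_Wsucc_fst z⟩
  obtain ⟨r, hrc, hrs⟩ := hK.elim_countable_subcover (fun a : W => Set.Iio (iW a))
    (fun _ => isOpen_Iio) hcov
  obtain ⟨u, hu⟩ := W_countable_bddAbove hrc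
  refine ⟨Wsucc u, fun z hz => ?_⟩
  obtain ⟨a, har, hza⟩ := Set.mem_iUnion₂.1 (hrs hz)
  exact lt_of_lt_of_le hza (iW_mono (le_trans (hu har) (le_of_lt (lt_Wsucc u))))

lemma closure_seq_Wsucc_mono (hT : TypeI Y') {b b' : W} (h : b ≤ b') :
    closure (hT.seq (Wsucc b)) ⊆ closure (hT.seq (Wsucc b')) := by
  rcases eq_or_lt_of_le h with rfl | h
  · exact le_rfl
  · exact (hT.mono _ _ (Wsucc_lt_Wsucc h)).trans subset_closure

/-- least `b` such that `y ∈ closure (seq (Wsucc b))`. -/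
noncomputable def bmin (hT : TypeI Y') (y : Y') : W := by
  classical
  have hne : {o : Ordinal | ∃ h : o < omega1, y ∈ closure (hT.seq (Wsucc ⟨o, h⟩))}.Nonempty := by
    obtain ⟨a, ha⟩ := hT.covers y
    exact ⟨a.1, a.2, subset_closure (hT.seq_subset_seq (lt_Wsucc a) ha)⟩
  exact ⟨Ordinal.lt_wf.min _ hne, (Ordinal.lt_wf.min_mem _ hne).choose⟩

lemma bmin_mem (hT : TypeI Y') (y : Y') :
    y ∈ closure (hT.seq (Wsucc (bmin hT y))) := by
  classical
  have hne : {o : Ordinal | ∃ h : o < omega1, y ∈ closure (hT.seq (Wsucc ⟨o, h⟩))}.Nonempty := by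
    obtain ⟨a, ha⟩ := hT.covers y
    exact ⟨a.1, a.2, subset_closure (hT.seq_subset_seq (lt_Wsucc a) ha)⟩
  exact (Ordinal.lt_wf.min_mem _ hne).choose_spec

lemma bmin_le (hT : TypeI Y') {y : Y'} {a : W}
    (h : y ∈ closure (hT.seq (Wsucc a))) : bmin hT y ≤ a := by
  classical
  have hne : {o : Ordinal | ∃ h : o < omega1, y ∈ closure (hT.seq (Wsucc ⟨o, h⟩))}.Nonempty := by
    obtain ⟨b, hb⟩ := hT.covers y
    exact ⟨b.1, b.2, subset_closure (hT.seq_subset_seq (lt_Wsucc b) hb)⟩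
  rw [W_le_iff]
  apply le_of_not_gt
  intro hlt
  exact Ordinal.lt_wf.not_lt_min _
    (show a.1 ∈ {o : Ordinal | ∃ h : o < omega1, y ∈ closure (hT.seq (Wsucc ⟨o, h⟩))}
      from ⟨a.2, h⟩) hlt

lemma lt_bmin (hT : TypeI Y') {y : Y'} {a : W}
    (h : y ∉ closure (hT.seq (Wsucc a))) : a < bmin hT y := by
  by_contra hle
  push_neg at hle
  exact h (closure_seq_Wsucc_mono hT hle (bmin_mem hT y))

/-- least `b` such that `y ∈ seq b`. -/
noncomputable def cmin (hT : TypeI Y') (y : Y') : W := by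
  classical
  have hne : {o : Ordinal | ∃ h : o < omega1, y ∈ hT.seq ⟨o, h⟩}.Nonempty := by
    obtain ⟨a, ha⟩ := hT.covers y
    exact ⟨a.1, a.2, ha⟩
  exact ⟨Ordinal.lt_wf.min _ hne, (Ordinal.lt_wf.min_mem _ hne).choose⟩

lemma cmin_mem (hT : TypeI Y') (y : Y') : y ∈ hT.seq (cmin hT y) := by
  classical
  have hne : {o : Ordinal | ∃ h : o < omega1, y ∈ hT.seq ⟨o, h⟩}.Nonempty := by
    obtain ⟨a, ha⟩ := hT.covers y
    exact ⟨a.1, a.2, ha⟩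
  exact (Ordinal.lt_wf.min_mem _ hne).choose_spec

lemma cmin_le (hT : TypeI Y') {y : Y'} {a : W} (h : y ∈ hT.seq a) : cmin hT y ≤ a := by
  classical
  have hne : {o : Ordinal | ∃ h : o < omega1, y ∈ hT.seq ⟨o, h⟩}.Nonempty := by
    obtain ⟨b, hb⟩ := hT.covers y
    exact ⟨b.1, b.2, hb⟩
  rw [W_le_iff]
  apply le_of_not_gt
  intro hlt
  exact Ordinal.lt_wf.not_lt_min _
    (show a.1 ∈ {o : Ordinal | ∃ h : o < omega1, y ∈ hT.seq ⟨o, h⟩} from ⟨a.2, h⟩) hlt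

lemma bmin_le_cmin (hT : TypeI Y') (y : Y') : bmin hT y ≤ cmin hT y :=
  bmin_le hT (subset_closure (hT.seq_subset_seq (lt_Wsucc _) (cmin_mem hT y)))

lemma cmin_le_bmin2 (hT : TypeI Y') (y : Y') :
    cmin hT y ≤ Wsucc (Wsucc (bmin hT y)) :=
  cmin_le hT (hT.mono _ _ (Wsucc_lt_Wsucc (lt_Wsucc _)) (bmin_mem hT y))

/-- The repaired slicer. -/
noncomputable def Smap (hT : TypeI Y') (s : Y' → LongRay) : Y' → LongRay :=
  fun y => max (s y) (iW (bmin hT y))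

lemma Smap_continuous (hT : TypeI Y') {s : Y' → LongRay} (hs : hT.Slicer s) :
    Continuous (Smap hT s) := by
  rw [continuous_iff_continuousAt]
  intro y
  rw [ContinuousAt, tendsto_order]
  constructor
  · -- lower bounds
    intro γ hγ
    rcases lt_max_iff.1 hγ with hγs | hγb
    · have hU : IsOpen (s ⁻¹' Set.Ioi γ) := isOpen_Ioi.preimage hs.1
      filter_upwards [hU.mem_nhds (by simpa using hγs)] with z hz
      exact lt_of_lt_of_le hz (le_max_left _ _)
    · have hwγ : (ofLex γ).1 < bmin hT y := lt_iW_iff.1 hγb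
      have hyU : y ∉ closure (hT.seq (Wsucc (ofLex γ).1)) := by
        intro hmem
        exact absurd (bmin_le hT hmem) (not_le_of_gt hwγ)
      have hU : IsOpen (closure (hT.seq (Wsucc (ofLex γ).1)))ᶜ :=
        isClosed_closure.isOpen_compl
      filter_upwards [hU.mem_nhds hyU] with z hz
      have : (ofLex γ).1 < bmin hT z := lt_bmin hT hz
      exact lt_of_lt_of_le (lt_iW_iff.2 this) (le_max_right _ _)
  · -- upper bounds
    intro β hβ
    have hsyβ : s y < β := lt_of_le_of_lt (le_max_left _ _) hβ
    have hbyβ : iW (bmin hT y) < β := lt_of_le_of_lt (le_max_right _ _) hβ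
    have hU1 : IsOpen (hT.seq (cmin hT y)) := hT.isOpen _
    have hU2 : IsOpen (s ⁻¹' Set.Iio β) := isOpen_Iio.preimage hs.1
    filter_upwards [hU1.mem_nhds (cmin_mem hT y), hU2.mem_nhds (by simpa using hsyβ)]
      with z hz1 hz2
    have hszβ : s z < β := hz2
    by_cases hbad : z ∈ hT.seq (bmin hT z)
    · -- "bad" point: its bmin is at most bmin of y
      have hle : bmin hT z ≤ cmin hT y :=
        bmin_le hT (subset_closure (hT.seq_subset_seq (lt_Wsucc _) hz1))
      have hnots : bmin hT z ≤ bmin hT y := by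
        by_contra hlt
        push_neg at hlt
        have h2 : (bmin hT z).1 ≤ Order.succ (Order.succ (bmin hT y).1) :=
          W_le_iff.1 (hle.trans (cmin_le_bmin2 hT y))
        have habs : ∀ w : W, bmin hT z = Wsucc w → False := by
          intro w hw
          have hzw : z ∈ closure (hT.seq (Wsucc w)) := by
            rw [← hw]
            exact subset_closure hbad
          have := bmin_le hT hzw
          rw [hw] at this
          exact absurd this (not_le_of_gt (lt_Wsucc w))
        rcases eq_or_lt_of_le h2 with heq | hlt2
        · exact habs (Wsucc (bmin hT y)) (Subtype.ext heq)
        · have h3 : (bmin hT z).1 ≤ Order.succ (bmin hT y).1 := Order.lt_succ_iff.1 hlt2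
          rcases eq_or_lt_of_le h3 with heq | hlt3
          · exact habs (bmin hT y) (Subtype.ext heq)
          · exact absurd (W_le_iff.2 (Order.lt_succ_iff.1 hlt3)) (not_le_of_gt hlt)
      calc Smap hT s z ≤ max (s z) (iW (bmin hT y)) :=
            max_le_max le_rfl (iW_mono hnots)
        _ < β := max_lt hszβ hbyβ
    · -- "good" point: the slicer dominates
      have hsz := (hs.2 (bmin hT z) z ⟨bmin_mem hT z, hbad⟩).1
      calc Smap hT s z = s z := max_eq_left hsz
        _ < β := hszβ

/-- `Smap` is large off `seq`. -/
lemma Smap_large (hT : TypeI Y') (s : Y' → LongRay) {y : Y'} {q : W}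
    (h : y ∉ hT.seq (Wsucc (Wsucc q))) : iW q ≤ Smap hT s y := by
  have h1 : q ≤ bmin hT y := by
    by_contra hlt
    push_neg at hlt
    have h2 : Wsucc (bmin hT y) < Wsucc (Wsucc q) :=
      lt_trans (Wsucc_lt_Wsucc hlt) (lt_Wsucc _)
    exact h (hT.mono _ _ h2 (bmin_mem hT y))
  exact le_trans (iW_mono h1) (le_max_right _ _)

/-- `Smap` is bounded on bounded sets. -/
lemma Smap_bounded (hT : TypeI Y') {s : Y' → LongRay} (hs : hT.Slicer s) (c : W) :
    ∃ q : W, Smap hT s '' (hT.seq c) ⊆ Set.Iio (iW q) := by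
  obtain ⟨q₀, hq₀⟩ := lindelof_subset_Iio ((hT.lindelof c).image hs.1)
  refine ⟨Wsucc (max q₀ (Wsucc c)), ?_⟩
  rintro _ ⟨z, hz, rfl⟩
  have h1 : s z < iW q₀ := hq₀ ⟨z, subset_closure hz, rfl⟩
  have h2 : bmin hT z ≤ c := bmin_le hT (subset_closure (hT.seq_subset_seq (lt_Wsucc _) hz))
  have h3 : iW (bmin hT z) < iW (Wsucc (max q₀ (Wsucc c))) :=
    iW_lt (lt_of_le_of_lt (h2.trans ((le_of_lt (lt_Wsucc c)).trans (le_max_right q₀ _)))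
      (lt_Wsucc _))
  exact max_lt (lt_of_lt_of_le h1 (iW_mono ((le_max_left q₀ _).trans
    (le_of_lt (lt_Wsucc _))))) h3

end Aux3

/-- (a) ω₁ is a Y-direction in itself; (b) if Y has a slicer, every L≥0-direction
is a Y-direction; (c) if there is an unbounded map L≥0 → Y, every Y-direction is
an L≥0-direction. -/
theorem stmt_19 {X : Type u} {Y : Type v} [TopologicalSpace X] [TopologicalSpace Y]
    [T2Space X] [T2Space Y] (hTX : TypeI X) (hTY : TypeI Y)
    (hLR : TypeI LongRay) (hLRseq : ∀ a : W, hLR.seq a = Set.Iio (iW a)) :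
    (∀ hW : TypeI W, (∀ a : W, hW.seq a = Set.Iio a) → YDirection hW hTY Set.univ) ∧
    ((∃ s : Y → LongRay, hTY.Slicer s) →
      ∀ D : Set X, YDirection hTX hLR D → YDirection hTX hTY D) ∧
    ((∃ g : LongRay → Y, Continuous g ∧ ¬ hTY.Bdd (Set.range g)) →
      ∀ D : Set X, YDirection hTX hTY D → YDirection hTX hLR D) := by
  refine ⟨?_, ?_, ?_⟩
  · -- (a)
    intro hW hWseq
    refine ⟨isClosed_univ, ?_, ?_⟩
    · rintro ⟨a, ha⟩
      have h1 := ha (Set.mem_univ a)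
      rw [hWseq] at h1
      exact lt_irrefl a h1
    · intro f hf hfD A _ hA
      have hrange : ¬ hTY.Bdd (Set.range f) := by rwa [← Set.image_univ]
      have hAunb : ¬ BddAbove A := by
        rintro ⟨u, hu⟩
        refine hA ⟨Wsucc u, fun x hx => ?_⟩
        rw [hWseq]
        exact lt_of_le_of_lt (hu hx) (lt_Wsucc u)
      exact core_unbounded (fun S hne hb => W_lub hne hb)
        (fun S hS => W_countable_bddAbove hS) w0 w0_le hTY f hf hrange A hAunb
  · -- (b)
    rintro ⟨s, hs⟩ D ⟨hDc, hDu, hDdir⟩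
    refine ⟨hDc, hDu, ?_⟩
    intro f hf hfD A hAD hA hbdd
    obtain ⟨c, hc⟩ := hbdd
    have hhc : Continuous (fun x => Smap hTY s (f x)) :=
      (Smap_continuous hTY hs).comp hf
    have hhD : ¬ hLR.Bdd ((fun x => Smap hTY s (f x)) '' D) := by
      rintro ⟨q, hq⟩
      rw [hLRseq] at hq
      have h0 : ¬ (f '' D ⊆ hTY.seq (Wsucc (Wsucc q))) := fun hsub => hfD ⟨_, hsub⟩
      obtain ⟨y, hyD, hy⟩ : ∃ y ∈ f '' D, y ∉ hTY.seq (Wsucc (Wsucc q)) := by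
        by_contra hcc
        push_neg at hcc
        exact h0 hcc
      obtain ⟨x, hxD, rfl⟩ := hyD
      have h1 : iW q ≤ Smap hTY s (f x) := Smap_large hTY s hy
      exact not_lt_of_ge h1 (hq ⟨x, hxD, rfl⟩)
    have hhA := hDdir _ hhc hhD A hAD hA
    apply hhA
    obtain ⟨q, hq⟩ := Smap_bounded hTY hs c
    refine ⟨q, ?_⟩
    rw [hLRseq]
    rintro _ ⟨x, hxA, rfl⟩
    exact hq ⟨f x, hc ⟨x, hxA, rfl⟩, rfl⟩
  · -- (c)
    rintro ⟨g, hgc, hgu⟩ D ⟨hDc, hDu, hDdir⟩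
    refine ⟨hDc, hDu, ?_⟩
    intro f hf hfD A hAD hA hbdd
    obtain ⟨q, hq⟩ := hbdd
    rw [hLRseq] at hq
    have hsub : f '' A ⊆ Set.Iic (iW q) := fun z hz => Set.mem_Iic.2 (le_of_lt (Set.mem_Iio.1 (hq hz)))
    have hgfA : hTY.Bdd ((g ∘ f) '' A) := by
      rw [Set.image_comp]
      exact hTY.bdd_mono (Set.image_mono (f := g) hsub)
        (bdd_image_Iic (fun S hne hb => LongRay_lub hne hb) lrZero lrZero_le hTY g hgc (iW q))
    have hfDunb : ¬ BddAbove (f '' D) := by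
      rintro ⟨u, hu⟩
      refine hfD ⟨Wsucc (ofLex u).1, ?_⟩
      rw [hLRseq]
      intro z hz
      exact lt_of_le_of_lt (hu hz) (lt_iW_Wsucc_fst u)
    have hgfD : ¬ hTY.Bdd ((g ∘ f) '' D) := by
      rw [Set.image_comp]
      exact core_unbounded (fun S hne hb => LongRay_lub hne hb)
        (fun S hS => LongRay_countable_bddAbove hS) lrZero lrZero_le hTY g hgc hgu
        (f '' D) hfDunb
    exact hDdir (g ∘ f) (hgc.comp hf) hgfD A hAD hA hgfA

end
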